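/- Let V₁ and V₂ be linear subspaces of ℝ^n with ℝ^n = V₁ ⊕ V₂, and let P₁ and P₂ denote the linear projections of ℝ^n onto V₁ along V₂ and onto V₂ along V₁, respectively. Assume that V₁ + ℤ^n and V₂ + ℤ^n are both dense in ℝ^n. Then the set Ξ := P₁(ℤ^n) + P₂(ℤ^n), which consists exactly of the unique intersection points (a + V₁) ∩ (b + V₂) for a, b ∈ ℤ^n, is an additive subgroup of ℝ^n and is dense in ℝ^n. -/

import Mathlib

/-!
The projection `P₁` kills `V₂`, so it maps the dense set `V₂ + ℤⁿ` onto `P₁(ℤⁿ)`; by continuity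
`P₁(ℤⁿ)` is dense in `V₁ = range P₁`. Likewise `P₂(ℤⁿ)` is dense in `V₂`. Hence the closure of the
group `Ξ = P₁(ℤⁿ) + P₂(ℤⁿ)` contains `V₁ + V₂ = ℝⁿ`.
-/

open Set Pointwise

theorem eq_zero_of_add_mem_of_disjoint {R M : Type*} [Ring R] [AddCommGroup M] [Module R M]
    {V₁ V₂ : Submodule R M} (hd : Disjoint V₁ V₂) {v y z : M} (hv : v ∈ V₂)
    (hy : y ∈ V₁) (hz : z ∈ V₂) (h : v = y + z) : y = 0 := by
  have hy₂ : y ∈ V₂ := by simpa [h] using V₂.sub_mem hv hz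
  exact Submodule.disjoint_def.mp hd y hy hy₂

section

variable {E F : Type*} [AddCommGroup E] [TopologicalSpace E]

theorem range_subset_closure_image_of_dense_add [AddCommGroup F] [TopologicalSpace F]
    {f : E →+ F} (hf : Continuous f) {V L : Set E} (hV : ∀ v ∈ V, f v = 0)
    (hdense : Dense (V + L)) : range f ⊆ closure (f '' L) := by
  have himage : f '' (V + L) ⊆ f '' L := by
    rintro _ ⟨_, ⟨v, hv, l, hl, rfl⟩, rfl⟩
    exact ⟨l, hl, by rw [map_add, hV v hv, zero_add]⟩
  calc range f = f '' closure (V + L) := by rw [hdense.closure_eq, image_univ]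
    _ ⊆ closure (f '' (V + L)) := image_closure_subset_closure_image hf
    _ ⊆ closure (f '' L) := closure_mono himage

theorem dense_map_sup_map [IsTopologicalAddGroup E] (L : AddSubgroup E) {V₁ V₂ : Set E}
    {P₁ P₂ : E →+ E} (hc₁ : Continuous P₁) (hc₂ : Continuous P₂)
    (hP₁ : ∀ v ∈ V₂, P₁ v = 0) (hP₂ : ∀ v ∈ V₁, P₂ v = 0) (hsum : ∀ x, P₁ x + P₂ x = x)
    (hd₁ : Dense (V₁ + (L : Set E))) (hd₂ : Dense (V₂ + (L : Set E))) :
    Dense ((L.map P₁ ⊔ L.map P₂ : AddSubgroup E) : Set E) := by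
  set Ξ := L.map P₁ ⊔ L.map P₂
  have h₁ : range P₁ ⊆ Ξ.topologicalClosure :=
    (range_subset_closure_image_of_dense_add hc₁ hP₁ hd₂).trans
      (closure_mono (SetLike.coe_subset_coe.mpr (le_sup_left : L.map P₁ ≤ Ξ)))
  have h₂ : range P₂ ⊆ Ξ.topologicalClosure :=
    (range_subset_closure_image_of_dense_add hc₂ hP₂ hd₁).trans
      (closure_mono (SetLike.coe_subset_coe.mpr (le_sup_right : L.map P₂ ≤ Ξ)))
  intro x
  rw [← hsum x]
  exact Ξ.topologicalClosure.add_mem (h₁ (mem_range_self x)) (h₂ (mem_range_self x))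

end

def intLattice (n : ℕ) : AddSubgroup (Fin n → ℝ) :=
  ((Int.castAddHom ℝ).compLeft (Fin n)).range

theorem setOf_exists_add_intCast_eq {n : ℕ} (V : Set (Fin n → ℝ)) :
    {x : Fin n → ℝ | ∃ v ∈ V, ∃ a : Fin n → ℤ, x = v + fun i => (a i : ℝ)} =
      V + (intLattice n : Set (Fin n → ℝ)) := by
  ext x
  simp only [mem_ofPred_eq, intLattice, AddMonoidHom.coe_range, mem_add, mem_range, eq_comm,
    existsAndEq, true_and]
  rfl

theorem setOf_exists_projection_add_eq {n : ℕ} (P₁ P₂ : (Fin n → ℝ) →ₗ[ℝ] (Fin n → ℝ)) :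
    {x : Fin n → ℝ | ∃ a b : Fin n → ℤ,
          x = P₁ (fun i => (a i : ℝ)) + P₂ (fun i => (b i : ℝ))} =
      ((intLattice n).map P₁.toAddMonoidHom ⊔ (intLattice n).map P₂.toAddMonoidHom :
        AddSubgroup (Fin n → ℝ)) := by
  ext x
  simp only [mem_ofPred_eq, intLattice, SetLike.mem_coe, AddSubgroup.mem_sup, AddSubgroup.mem_map,
    AddMonoidHom.mem_range, eq_comm, existsAndEq, true_and]
  rfl

/-- Let `ℝ^n = V₁ ⊕ V₂` with projections `P₁, P₂`, and suppose `V₁ + ℤ^n` and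
`V₂ + ℤ^n` are dense in `ℝ^n`.  Then `Ξ = P₁(ℤ^n) + P₂(ℤ^n)` is an additive
subgroup of `ℝ^n` and is dense. -/
theorem stmt7 {n : ℕ} (V₁ V₂ : Submodule ℝ (Fin n → ℝ)) (hcompl : IsCompl V₁ V₂)
    (P₁ P₂ : (Fin n → ℝ) →ₗ[ℝ] (Fin n → ℝ))
    (hP₁ : ∀ x, P₁ x ∈ V₁) (hP₂ : ∀ x, P₂ x ∈ V₂)
    (hPsum : ∀ x : Fin n → ℝ, x = P₁ x + P₂ x)
    (hdense₁ : Dense {x : Fin n → ℝ | ∃ v ∈ V₁, ∃ a : Fin n → ℤ,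
      x = v + fun i => (a i : ℝ)})
    (hdense₂ : Dense {x : Fin n → ℝ | ∃ v ∈ V₂, ∃ a : Fin n → ℤ,
      x = v + fun i => (a i : ℝ)}) :
    (0 : Fin n → ℝ) ∈
        {x : Fin n → ℝ | ∃ a b : Fin n → ℤ,
          x = P₁ (fun i => (a i : ℝ)) + P₂ (fun i => (b i : ℝ))} ∧
    (∀ x ∈ {x : Fin n → ℝ | ∃ a b : Fin n → ℤ,
          x = P₁ (fun i => (a i : ℝ)) + P₂ (fun i => (b i : ℝ))},
      ∀ y ∈ {x : Fin n → ℝ | ∃ a b : Fin n → ℤ,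
          x = P₁ (fun i => (a i : ℝ)) + P₂ (fun i => (b i : ℝ))},
      x + y ∈ {x : Fin n → ℝ | ∃ a b : Fin n → ℤ,
          x = P₁ (fun i => (a i : ℝ)) + P₂ (fun i => (b i : ℝ))}) ∧
    (∀ x ∈ {x : Fin n → ℝ | ∃ a b : Fin n → ℤ,
          x = P₁ (fun i => (a i : ℝ)) + P₂ (fun i => (b i : ℝ))},
      -x ∈ {x : Fin n → ℝ | ∃ a b : Fin n → ℤ,
          x = P₁ (fun i => (a i : ℝ)) + P₂ (fun i => (b i : ℝ))}) ∧
    Dense {x : Fin n → ℝ | ∃ a b : Fin n → ℤ,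
          x = P₁ (fun i => (a i : ℝ)) + P₂ (fun i => (b i : ℝ))} := by
  have hdisj := hcompl.disjoint
  rw [setOf_exists_projection_add_eq]
  refine ⟨zero_mem _, fun x hx y hy => add_mem hx hy, fun x hx => neg_mem hx, ?_⟩
  refine dense_map_sup_map (intLattice n) (V₁ := V₁) (V₂ := V₂)
    P₁.continuous_of_finiteDimensional P₂.continuous_of_finiteDimensional
    (fun v hv => eq_zero_of_add_mem_of_disjoint hdisj hv (hP₁ v) (hP₂ v) (hPsum v))
    (fun v hv => eq_zero_of_add_mem_of_disjoint hdisj.symm hv (hP₂ v) (hP₁ v)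
      ((hPsum v).trans (add_comm _ _)))
    (fun x => (hPsum x).symm) ?_ ?_
  · rwa [← setOf_exists_add_intCast_eq]
  · rwa [← setOf_exists_add_intCast_eq]
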